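/- arXiv:0908.3305 — 3 statements merged into one kernel-verified Lean document; each statement's English description precedes it below -/
import Mathlib

section
/- Define integers a_n by a_1 = -3, a_2 = 3, a_3 = -9, and a_n = -3(a_{n-1} + a_{n-2} + a_{n-3}) for n ≥ 4, and write a_n = (-1)^n · 3^{⌈n/3⌉} · b_n. Then for every n ≥ 1, b_n is an integer not divisible by 9. -/
/-- `a n = D(Cₙ, -3)`: `a 1 = -3`, `a 2 = 3`, `a 3 = -9`,
and `a n = -3(a (n-1) + a (n-2) + a (n-3))` for `n ≥ 4`. -/
def aSeq : ℕ → ℤ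
  | 0 => 0
  | 1 => -3
  | 2 => 3
  | 3 => -9
  | (n + 4) => -3 * (aSeq (n + 3) + aSeq (n + 2) + aSeq (n + 1))

def bSeq : ℕ → ℤ
  | 0 => 3
  | 1 => 1
  | 2 => 1
  | (n + 3) =>
    if (n + 3) % 3 = 0 then 3 * bSeq (n + 2) - 3 * bSeq (n + 1) + bSeq n
    else if (n + 3) % 3 = 1 then bSeq (n + 2) - bSeq (n + 1) + bSeq n
    else 3 * bSeq (n + 2) - bSeq (n + 1) + bSeq n

lemma bSeq0 (k : ℕ) : bSeq (3*k+3) = 3 * bSeq (3*k+2) - 3 * bSeq (3*k+1) + bSeq (3*k) := by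
  rw [bSeq]; simp [Nat.add_mul_mod_self_left, Nat.mul_mod_right]

lemma bSeq1 (k : ℕ) : bSeq (3*k+4) = bSeq (3*k+3) - bSeq (3*k+2) + bSeq (3*k+1) := by
  have : 3*k+4 = (3*k+1) + 3 := by ring
  rw [this, bSeq]
  have h : (3*k+1+3) % 3 = 1 := by omega
  simp [h]

lemma bSeq2 (k : ℕ) : bSeq (3*k+5) = 3 * bSeq (3*k+4) - bSeq (3*k+3) + bSeq (3*k+2) := by
  have : 3*k+5 = (3*k+2) + 3 := by ring
  rw [this, bSeq]
  have h : (3*k+2+3) % 3 = 2 := by omega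
  simp [h]

lemma aSeq_rec (n : ℕ) : aSeq (n+4) = -3 * (aSeq (n + 3) + aSeq (n + 2) + aSeq (n + 1)) := rfl

lemma bv0 : bSeq 0 = 3 := rfl
lemma bv1 : bSeq 1 = 1 := rfl
lemma bv2 : bSeq 2 = 1 := rfl
lemma bv3 : bSeq 3 = 3 := by have h := bSeq0 0; norm_num [bv2, bv1, bv0] at h; exact h
lemma bv4 : bSeq 4 = 3 := by have h := bSeq1 0; norm_num [bv3, bv2, bv1] at h; exact h
lemma bv5 : bSeq 5 = 7 := by have h := bSeq2 0; norm_num [bv4, bv3, bv2] at h; exact h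
lemma bv6 : bSeq 6 = 15 := by have h := bSeq0 1; norm_num [bv5, bv4, bv3] at h; exact h
lemma bv7 : bSeq 7 = 11 := by have h := bSeq1 1; norm_num [bv6, bv5, bv4] at h; exact h
lemma bv8 : bSeq 8 = 25 := by have h := bSeq2 1; norm_num [bv7, bv6, bv5] at h; exact h
lemma bv9 : bSeq 9 = 57 := by have h := bSeq0 2; norm_num [bv8, bv7, bv6] at h; exact h
lemma bv10 : bSeq 10 = 43 := by have h := bSeq1 2; norm_num [bv9, bv8, bv7] at h; exact h
lemma bv11 : bSeq 11 = 97 := by have h := bSeq2 2; norm_num [bv10, bv9, bv8] at h; exact h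
lemma bv12 : bSeq 12 = 219 := by have h := bSeq0 3; norm_num [bv11, bv10, bv9] at h; exact h
lemma bv13 : bSeq 13 = 165 := by have h := bSeq1 3; norm_num [bv12, bv11, bv10] at h; exact h
lemma bv14 : bSeq 14 = 373 := by have h := bSeq2 3; norm_num [bv13, bv12, bv11] at h; exact h
lemma bv15 : bSeq 15 = 843 := by have h := bSeq0 4; norm_num [bv14, bv13, bv12] at h; exact h
lemma bv16 : bSeq 16 = 635 := by have h := bSeq1 4; norm_num [bv15, bv14, bv13] at h; exact h
lemma bv17 : bSeq 17 = 1435 := by have h := bSeq2 4; norm_num [bv16, bv15, bv14] at h; exact h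
lemma bv18 : bSeq 18 = 3243 := by have h := bSeq0 5; norm_num [bv17, bv16, bv15] at h; exact h
lemma bv19 : bSeq 19 = 2443 := by have h := bSeq1 5; norm_num [bv18, bv17, bv16] at h; exact h
lemma bv20 : bSeq 20 = 5521 := by have h := bSeq2 5; norm_num [bv19, bv18, bv17] at h; exact h
lemma bv21 : bSeq 21 = 12477 := by have h := bSeq0 6; norm_num [bv20, bv19, bv18] at h; exact h
lemma bv22 : bSeq 22 = 9399 := by have h := bSeq1 6; norm_num [bv21, bv20, bv19] at h; exact h
lemma bv23 : bSeq 23 = 21241 := by have h := bSeq2 6; norm_num [bv22, bv21, bv20] at h; exact h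
lemma bv24 : bSeq 24 = 48003 := by have h := bSeq0 7; norm_num [bv23, bv22, bv21] at h; exact h
lemma bv25 : bSeq 25 = 36161 := by have h := bSeq1 7; norm_num [bv24, bv23, bv22] at h; exact h
lemma bv26 : bSeq 26 = 81721 := by have h := bSeq2 7; norm_num [bv25, bv24, bv23] at h; exact h
lemma bv27 : bSeq 27 = 184683 := by have h := bSeq0 8; norm_num [bv26, bv25, bv24] at h; exact h
lemma bv28 : bSeq 28 = 139123 := by have h := bSeq1 8; norm_num [bv27, bv26, bv25] at h; exact h
lemma bv29 : bSeq 29 = 314407 := by have h := bSeq2 8; norm_num [bv28, bv27, bv26] at h; exact h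
lemma bv30 : bSeq 30 = 710535 := by have h := bSeq0 9; norm_num [bv29, bv28, bv27] at h; exact h
lemma bv31 : bSeq 31 = 535251 := by have h := bSeq1 9; norm_num [bv30, bv29, bv28] at h; exact h
lemma bv32 : bSeq 32 = 1209625 := by have h := bSeq2 9; norm_num [bv31, bv30, bv29] at h; exact h

lemma main_eq (k : ℕ) :
    aSeq (3*k+1) = (-1)^(3*k+1) * 3^(k+1) * bSeq (3*k+1)
    ∧ aSeq (3*k+2) = (-1)^(3*k+2) * 3^(k+1) * bSeq (3*k+2)
    ∧ aSeq (3*k+3) = (-1)^(3*k+3) * 3^(k+1) * bSeq (3*k+3) := by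
  induction k with
  | zero => refine ⟨?_, ?_, ?_⟩ <;> norm_num [aSeq, bSeq]
  | succ k ih =>
    obtain ⟨h1, h2, h3⟩ := ih
    simp only [show 3*(k+1)+1 = 3*k+4 from by ring, show 3*(k+1)+2 = 3*k+5 from by ring,
      show 3*(k+1)+3 = 3*k+6 from by ring]
    have r1 : aSeq (3*k+4) = -3 * (aSeq (3*k+3) + aSeq (3*k+2) + aSeq (3*k+1)) := by
      have h := aSeq_rec (3*k)
      simpa using h
    have r2 : aSeq (3*k+5) = -3 * (aSeq (3*k+4) + aSeq (3*k+3) + aSeq (3*k+2)) := by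
      have h := aSeq_rec (3*k+1)
      simp only [show 3*k+1+4 = 3*k+5 from by omega, show 3*k+1+3 = 3*k+4 from by omega,
        show 3*k+1+2 = 3*k+3 from by omega, show 3*k+1+1 = 3*k+2 from by omega] at h
      exact h
    have r3 : aSeq (3*k+6) = -3 * (aSeq (3*k+5) + aSeq (3*k+4) + aSeq (3*k+3)) := by
      have h := aSeq_rec (3*k+2)
      simp only [show 3*k+2+4 = 3*k+6 from by omega, show 3*k+2+3 = 3*k+5 from by omega,
        show 3*k+2+2 = 3*k+4 from by omega, show 3*k+2+1 = 3*k+3 from by omega] at h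
      exact h
    have hb3 : bSeq (3*k+6) = 3 * bSeq (3*k+5) - 3 * bSeq (3*k+4) + bSeq (3*k+3) := by
      have h := bSeq0 (k+1)
      simp only [show 3*(k+1)+3 = 3*k+6 from by ring, show 3*(k+1)+2 = 3*k+5 from by ring,
        show 3*(k+1)+1 = 3*k+4 from by ring, show 3*(k+1) = 3*k+3 from by ring] at h
      exact h
    have s1 : ((-1:ℤ))^(3*k+1) = (-1)^(3*k) * (-1) := by rw [pow_succ]
    have s2 : ((-1:ℤ))^(3*k+2) = (-1)^(3*k) * 1 := by rw [pow_add]; norm_num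
    have s3 : ((-1:ℤ))^(3*k+3) = (-1)^(3*k) * (-1) := by rw [pow_add]; norm_num
    have s4 : ((-1:ℤ))^(3*k+4) = (-1)^(3*k) * 1 := by rw [pow_add]; norm_num
    have s5 : ((-1:ℤ))^(3*k+5) = (-1)^(3*k) * (-1) := by rw [pow_add]; norm_num
    have s6 : ((-1:ℤ))^(3*k+6) = (-1)^(3*k) * 1 := by rw [pow_add]; norm_num
    have key1 : aSeq (3*k+4) = (-1)^(3*k+4) * 3^(k+1+1) * bSeq (3*k+4) := by
      rw [r1, h1, h2, h3, bSeq1 k, s1, s2, s3, s4, pow_succ]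
      ring
    have key2 : aSeq (3*k+5) = (-1)^(3*k+5) * 3^(k+1+1) * bSeq (3*k+5) := by
      rw [r2, key1, h3, h2, bSeq2 k, s2, s3, s4, s5, pow_succ]
      ring
    have key3 : aSeq (3*k+6) = (-1)^(3*k+6) * 3^(k+1+1) * bSeq (3*k+6) := by
      rw [r3, key2, key1, h3, hb3, s3, s4, s5, s6, pow_succ]
      ring
    exact ⟨key1, key2, key3⟩

lemma bSeq_period (k : ℕ) :
    bSeq (3*k+30) % 9 = bSeq (3*k+3) % 9
    ∧ bSeq (3*k+31) % 9 = bSeq (3*k+4) % 9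
    ∧ bSeq (3*k+32) % 9 = bSeq (3*k+5) % 9 := by
  induction k with
  | zero =>
    refine ⟨?_, ?_, ?_⟩ <;>
      simp only [Nat.mul_zero, Nat.zero_add, bv3, bv4, bv5, bv30, bv31, bv32] <;> decide
  | succ k ih =>
    obtain ⟨h1, h2, h3⟩ := ih
    simp only [show 3*(k+1)+30 = 3*k+33 from by ring, show 3*(k+1)+31 = 3*k+34 from by ring,
      show 3*(k+1)+32 = 3*k+35 from by ring, show 3*(k+1)+3 = 3*k+6 from by ring,
      show 3*(k+1)+4 = 3*k+7 from by ring, show 3*(k+1)+5 = 3*k+8 from by ring]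
    have e1 : bSeq (3*k+33) = 3 * bSeq (3*k+32) - 3 * bSeq (3*k+31) + bSeq (3*k+30) := by
      have h := bSeq0 (k+10)
      simp only [show 3*(k+10)+3 = 3*k+33 from by ring, show 3*(k+10)+2 = 3*k+32 from by ring,
        show 3*(k+10)+1 = 3*k+31 from by ring, show 3*(k+10) = 3*k+30 from by ring] at h
      exact h
    have e1' : bSeq (3*k+6) = 3 * bSeq (3*k+5) - 3 * bSeq (3*k+4) + bSeq (3*k+3) := by
      have h := bSeq0 (k+1)
      simp only [show 3*(k+1)+3 = 3*k+6 from by ring, show 3*(k+1)+2 = 3*k+5 from by ring,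
        show 3*(k+1)+1 = 3*k+4 from by ring, show 3*(k+1) = 3*k+3 from by ring] at h
      exact h
    have e2 : bSeq (3*k+34) = bSeq (3*k+33) - bSeq (3*k+32) + bSeq (3*k+31) := by
      have h := bSeq1 (k+10)
      simp only [show 3*(k+10)+4 = 3*k+34 from by ring, show 3*(k+10)+3 = 3*k+33 from by ring,
        show 3*(k+10)+2 = 3*k+32 from by ring, show 3*(k+10)+1 = 3*k+31 from by ring] at h
      exact h
    have e2' : bSeq (3*k+7) = bSeq (3*k+6) - bSeq (3*k+5) + bSeq (3*k+4) := by
      have h := bSeq1 (k+1)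
      simp only [show 3*(k+1)+4 = 3*k+7 from by ring, show 3*(k+1)+3 = 3*k+6 from by ring,
        show 3*(k+1)+2 = 3*k+5 from by ring, show 3*(k+1)+1 = 3*k+4 from by ring] at h
      exact h
    have e3 : bSeq (3*k+35) = 3 * bSeq (3*k+34) - bSeq (3*k+33) + bSeq (3*k+32) := by
      have h := bSeq2 (k+10)
      simp only [show 3*(k+10)+5 = 3*k+35 from by ring, show 3*(k+10)+4 = 3*k+34 from by ring,
        show 3*(k+10)+3 = 3*k+33 from by ring, show 3*(k+10)+2 = 3*k+32 from by ring] at h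
      exact h
    have e3' : bSeq (3*k+8) = 3 * bSeq (3*k+7) - bSeq (3*k+6) + bSeq (3*k+5) := by
      have h := bSeq2 (k+1)
      simp only [show 3*(k+1)+5 = 3*k+8 from by ring, show 3*(k+1)+4 = 3*k+7 from by ring,
        show 3*(k+1)+3 = 3*k+6 from by ring, show 3*(k+1)+2 = 3*k+5 from by ring] at h
      exact h
    refine ⟨?_, ?_, ?_⟩
    · rw [e1, e1']; omega
    · rw [e2, e2', e1, e1']; omega
    · rw [e3, e3', e2, e2', e1, e1']; omega

lemma bSeq_period' (n : ℕ) : bSeq (n + 30) % 9 = bSeq (n + 3) % 9 := by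
  obtain ⟨k, r, hr, rfl⟩ : ∃ k r, r < 3 ∧ n = 3*k + r :=
    ⟨n/3, n%3, Nat.mod_lt _ (by norm_num), by omega⟩
  interval_cases r
  · simpa using (bSeq_period k).1
  · have h := (bSeq_period k).2.1
    simpa [show 3*k+1+30 = 3*k+31 from by omega, show 3*k+1+3 = 3*k+4 from by omega] using h
  · have h := (bSeq_period k).2.2
    simpa [show 3*k+2+30 = 3*k+32 from by omega, show 3*k+2+3 = 3*k+5 from by omega] using h

lemma bSeq_reduce (q r : ℕ) : bSeq (27*q + r + 3) % 9 = bSeq (r + 3) % 9 := by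
  induction q with
  | zero => simp
  | succ q ih =>
    calc bSeq (27*(q+1) + r + 3) % 9 = bSeq ((27*q + r) + 30) % 9 := by ring_nf
      _ = bSeq ((27*q + r) + 3) % 9 := bSeq_period' _
      _ = bSeq (r + 3) % 9 := by rw [← ih]
  
lemma bSeq_not_nine_dvd (n : ℕ) (hn : 1 ≤ n) : ¬ (9 ∣ bSeq n) := by
  rw [Int.dvd_iff_emod_eq_zero]
  match n, hn with
  | 1, _ => rw [bv1]; decide
  | 2, _ => rw [bv2]; decide
  | (m+3), _ =>
    have h : bSeq (m+3) % 9 = bSeq (m % 27 + 3) % 9 := by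
      rw [show m + 3 = 27 * (m / 27) + m % 27 + 3 from by omega, bSeq_reduce]
    rw [h]
    have hm : m % 27 < 27 := Nat.mod_lt _ (by norm_num)
    interval_cases h27 : (m % 27) <;>
      simp only [Nat.reduceAdd, bv3, bv4, bv5, bv6, bv7, bv8, bv9, bv10, bv11, bv12, bv13,
        bv14, bv15, bv16, bv17, bv18, bv19, bv20, bv21, bv22, bv23, bv24, bv25, bv26,
        bv27, bv28, bv29] <;> decide

lemma ceil_eq (n : ℕ) (hn : 1 ≤ n) : ⌈(n : ℚ) / 3⌉₊ = (n + 2) / 3 := by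
  rw [Nat.ceil_eq_iff (by omega)]
  constructor
  · rw [lt_div_iff₀ (by norm_num)]
    have h : (((n+2)/3 - 1) * 3 : ℕ) < n := by omega
    exact_mod_cast h
  · rw [div_le_iff₀ (by norm_num)]
    have h : n ≤ ((n+2)/3) * 3 := by omega
    exact_mod_cast h

theorem aSeq_eq_pow_mul_b (n : ℕ) (hn : 1 ≤ n) :
    ∃ b : ℤ, aSeq n = (-1) ^ n * 3 ^ (⌈(n : ℚ) / 3⌉₊) * b ∧ ¬ (9 ∣ b) := by
  refine ⟨bSeq n, ?_, bSeq_not_nine_dvd n hn⟩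
  rw [ceil_eq n hn]
  obtain ⟨k, r, hr1, hr2, rfl⟩ : ∃ k r, 1 ≤ r ∧ r ≤ 3 ∧ n = 3*k + r :=
    ⟨(n-1)/3, (n-1)%3 + 1, by omega, by omega, by omega⟩
  obtain ⟨h1, h2, h3⟩ := main_eq k
  interval_cases r
  · rw [show (3*k+1+2)/3 = k + 1 from by omega]; exact h1
  · rw [show (3*k+2+2)/3 = k + 1 from by omega]; exact h2
  · rw [show (3*k+3+2)/3 = k + 1 from by omega]; exact h3
end

section
/- Let β_n = D'(C_n, -1), the derivative of the domination polynomial of C_n evaluated at -1. Then β_n = -n if n ≡ 0 (mod 4), β_n = n if n ≡ 1 (mod 4), and β_n = 0 if n ≡ 2 or 3 (mod 4). -/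
/-
Differentiating, `D'(G, -1) = -∑_v ∑_{S ∋ v dominating} (-1)^|S|`. Rotations of `C_n` act
transitively on its vertices, so every inner sum equals the one at `v = 0`, say `a_n`, and
`D'(C_n, -1) = -n a_n`. Cutting the cycle at `0 ∈ S` identifies the dominating sets containing `0`
with the sets `T ∋ 0` of `{0, …, n-1}` meeting every three consecutive integers below `n`.
Appending the positions one at a time, while tracking how many empty positions are forced at the
end, gives a three-state linear recursion whose solution is 4-periodic:
`a_n = [n ≡ 0] - [n ≡ 1] (mod 4)`.
-/

open Polynomial SimpleGraph

/-- `S` is a dominating set of `G`: every vertex is in `S` or adjacent to a vertex of `S`. -/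
def IsDomSet {V : Type*} (G : SimpleGraph V) (S : Finset V) : Prop :=
  ∀ v : V, v ∈ S ∨ ∃ u ∈ S, G.Adj u v

/-- The domination polynomial `D(G,x) = ∑ d(G,i) xⁱ`. -/
noncomputable def domPoly {V : Type*} [Fintype V] (G : SimpleGraph V) : Polynomial ℤ :=
  ∑ i ∈ Finset.range (Fintype.card V + 1),
    (Nat.card {S : Finset V // IsDomSet G S ∧ S.card = i} : ℤ) • (X : Polynomial ℤ) ^ i

open Finset

open scoped Classical

section DominatingSets

variable {V W : Type*}

theorem isDomSet_map_iso_iff {G : SimpleGraph V} {H : SimpleGraph W} (φ : G ≃g H)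
    (S : Finset V) : IsDomSet H (S.map φ.toEquiv.toEmbedding) ↔ IsDomSet G S := by
  refine φ.toEquiv.forall_congr_right.symm.trans (forall_congr' fun v =>
    or_congr (mem_map' _) ⟨?_, ?_⟩)
  · rintro ⟨u, hu, huv⟩
    obtain ⟨w, hw, rfl⟩ := mem_map.1 hu
    exact ⟨w, hw, φ.map_adj_iff.1 huv⟩
  · rintro ⟨u, hu, huv⟩
    exact ⟨φ u, mem_map_of_mem _ hu, φ.map_adj_iff.2 huv⟩

variable [Fintype V]

theorem domPoly_eq_sum (G : SimpleGraph V) : domPoly G = ∑ S with IsDomSet G S, X ^ #S := by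
  rw [domPoly, ← sum_fiberwise_of_maps_to (t := range (Fintype.card V + 1)) (g := card)
    fun S _ => mem_range.2 (Nat.lt_succ_of_le (card_le_univ S))]
  refine sum_congr rfl fun i _ => ?_
  rw [Nat.card_eq_fintype_card, Fintype.card_subtype, filter_filter, natCast_zsmul, ← sum_const]
  exact sum_congr rfl fun S hS => by rw [(mem_filter.1 hS).2.2]

variable [DecidableEq V]

theorem sum_card_smul_eq_sum_sum_mem {M : Type*} [AddCommMonoid M] (𝒜 : Finset (Finset V))
    (g : Finset V → M) : ∑ S ∈ 𝒜, #S • g S = ∑ v, ∑ S ∈ 𝒜 with v ∈ S, g S := by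
  simp_rw [sum_filter]
  rw [sum_comm]
  refine sum_congr rfl fun S _ => ?_
  rw [← sum_filter, filter_mem_eq_inter, univ_inter, sum_const]

theorem derivative_domPoly_eval_neg_one (G : SimpleGraph V) :
    (derivative (domPoly G)).eval (-1) = -∑ v, ∑ S with IsDomSet G S ∧ v ∈ S, (-1 : ℤ) ^ #S := by
  have hterm (c : ℕ) : (c : ℤ) * (-1) ^ (c - 1) = -(c • (-1 : ℤ) ^ c) := by
    cases c <;> simp [pow_succ]
  simp_rw [domPoly_eq_sum, derivative_sum, derivative_X_pow, eval_finsetSum, eval_mul, eval_C,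
    eval_pow, eval_X, hterm, sum_neg_distrib, sum_card_smul_eq_sum_sum_mem, filter_filter]

theorem sum_isDomSet_mem_iso {M : Type*} [AddCommMonoid M] {G : SimpleGraph V} (φ : G ≃g G)
    (v : V) (f : ℕ → M) :
    ∑ S with IsDomSet G S ∧ φ v ∈ S, f #S = ∑ S with IsDomSet G S ∧ v ∈ S, f #S := by
  rw [sum_filter, sum_filter]
  refine (Fintype.sum_equiv φ.toEquiv.finsetCongr _ _ fun S => ?_).symm
  simp only [Equiv.finsetCongr_apply, isDomSet_map_iso_iff, card_map]
  exact if_congr (and_congr_right' (mem_map' φ.toEquiv.toEmbedding).symm) rfl rfl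

end DominatingSets

theorem isDomSet_circulantGraph_singleton_iff {G : Type*} [AddCommGroup G] (d : G)
    (S : Finset G) :
    IsDomSet (circulantGraph {d}) S ↔ ∀ v, v ∈ S ∨ v + d ∈ S ∨ v - d ∈ S := by
  refine forall_congr' fun v => ⟨?_, ?_⟩
  · rintro (hv | ⟨u, hu, -, huv | huv⟩)
    · exact Or.inl hv
    · obtain rfl : u = v + d := by rw [← Set.mem_singleton_iff.1 huv]; abel
      exact Or.inr (Or.inl hu)
    · obtain rfl : u = v - d := by rw [← Set.mem_singleton_iff.1 huv]; abel
      exact Or.inr (Or.inr hu)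
  · rintro (hv | hv | hv)
    · exact Or.inl hv
    · by_cases h : v + d = v
      · exact Or.inl (h ▸ hv)
      · exact Or.inr ⟨v + d, hv, h, Or.inl (by simp)⟩
    · by_cases h : v - d = v
      · exact Or.inl (h ▸ hv)
      · exact Or.inr ⟨v - d, hv, h, Or.inr (by simp)⟩

def MeetsTriples (T : Finset ℕ) (N : ℕ) : Prop :=
  ∀ i, i + 2 < N → i ∈ T ∨ i + 1 ∈ T ∨ i + 2 ∈ T

theorem forall_mem_or_add_one_mem_or_sub_one_mem_iff_meetsTriples {m : ℕ}
    {S : Finset (Fin (m + 1))} (h0 : 0 ∈ S) :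
    (∀ v, v ∈ S ∨ v + 1 ∈ S ∨ v - 1 ∈ S) ↔ MeetsTriples (S.map Fin.valEmbedding) (m + 1) := by
  have hmem (v : Fin (m + 1)) : v ∈ S ↔ (v : ℕ) ∈ S.map Fin.valEmbedding := (mem_map' _).symm
  constructor
  · intro h i hi
    have hv := h ⟨i + 1, by omega⟩
    rw [hmem, hmem, hmem, Fin.val_add_one_of_lt' (by simp; omega),
      Fin.val_sub_one_of_ne_zero (by simp [Fin.ext_iff])] at hv
    simp only [add_tsub_cancel_right] at hv
    tauto
  · intro h v
    by_cases hv0 : v = 0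
    · exact Or.inl (hv0 ▸ h0)
    by_cases hvm : v = Fin.last m
    · exact Or.inr (Or.inl (by rwa [hvm, Fin.last_add_one]))
    have hv0' : (v : ℕ) ≠ 0 := fun h => hv0 (Fin.ext h)
    have hvm' : (v : ℕ) ≠ m := fun h => hvm (Fin.ext h)
    have hv := h (v - 1) (by omega)
    rw [hmem, hmem, hmem, Fin.val_add_one_of_lt' (by omega), Fin.val_sub_one_of_ne_zero hv0]
    rw [show (v : ℕ) - 1 + 1 = v by omega, show (v : ℕ) - 1 + 2 = v + 1 by omega] at hv
    tauto

theorem isDomSet_cycleGraph_iff_meetsTriples {m : ℕ} {S : Finset (Fin (m + 1))} (h0 : 0 ∈ S) :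
    IsDomSet (cycleGraph (m + 1)) S ↔ MeetsTriples (S.map Fin.valEmbedding) (m + 1) := by
  rw [cycleGraph_eq_circulantGraph, isDomSet_circulantGraph_singleton_iff,
    forall_mem_or_add_one_mem_or_sub_one_mem_iff_meetsTriples h0]

theorem sum_isDomSet_cycleGraph_mem {M : Type*} [AddCommMonoid M] {m : ℕ} (v : Fin (m + 1))
    (f : ℕ → M) :
    ∑ S with IsDomSet (cycleGraph (m + 1)) S ∧ v ∈ S, f #S =
      ∑ S with IsDomSet (cycleGraph (m + 1)) S ∧ 0 ∈ S, f #S := by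
  rw [cycleGraph_eq_circulantGraph]
  let φ : circulantGraph {(1 : Fin (m + 1))} ≃g circulantGraph {(1 : Fin (m + 1))} :=
    ⟨Equiv.addRight v, circulantGraph_adj_translate⟩
  rw [← show φ 0 = v from zero_add v]
  exact sum_isDomSet_mem_iso φ 0 f

theorem sum_map_valEmbedding_eq_sum_powerset_range {M : Type*} [AddCommMonoid M] (n : ℕ)
    (F : Finset ℕ → M) :
    ∑ S : Finset (Fin n), F (S.map Fin.valEmbedding) = ∑ T ∈ (range n).powerset, F T := by
  rw [← Nat.Iio_eq_range, ← Fin.map_valEmbedding_univ, map_eq_image, powerset_image,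
    sum_image fun S _ T _ h => image_injective Fin.valEmbedding.injective h, powerset_univ]
  simp [map_eq_image]

theorem meetsTriples_insert_iff {T : Finset ℕ} {N k : ℕ} (hk : k ≤ 2) :
    MeetsTriples (insert N T) (N + 1 + k) ↔ MeetsTriples T N := by
  constructor
  · intro h i hi
    have hNi : ∀ j, j < N → (j ∈ insert N T ↔ j ∈ T) := fun j hj => by simp [hj.ne]
    have := h i (by omega)
    rwa [hNi i (by omega), hNi (i + 1) (by omega), hNi (i + 2) hi] at this
  · intro h i hi
    by_cases hiN : i + 2 < N
    · rcases h i hiN with h' | h' | h' <;> simp [h']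
    · have : i = N ∨ i + 1 = N ∨ i + 2 = N := by omega
      rcases this with h' | h' | h' <;> simp [h']

theorem not_meetsTriples_add_three {T : Finset ℕ} {N : ℕ} (hT : T ⊆ range N) :
    ¬ MeetsTriples T (N + 3) := fun h => by
  rcases h N (by omega) with h' | h' | h' <;> simpa using hT h'

noncomputable def signedTripleCount (N k : ℕ) : ℤ :=
  ∑ T ∈ (range N).powerset with 0 ∈ T ∧ MeetsTriples T (N + k), (-1) ^ #T

theorem signedTripleCount_one {k : ℕ} (hk : k ≤ 2) : signedTripleCount 1 k = -1 := by
  have : MeetsTriples {0} (1 + k) := fun i hi => Or.inl (by simp; omega)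
  rw [signedTripleCount, sum_filter, range_one, ← insert_empty_eq,
    sum_powerset_insert (notMem_empty 0)]
  simp [this]

theorem signedTripleCount_three (N : ℕ) : signedTripleCount N 3 = 0 :=
  sum_eq_zero fun T hT => by
    simp only [mem_filter, mem_powerset] at hT
    exact absurd hT.2.2 (not_meetsTriples_add_three hT.1)

theorem signedTripleCount_succ {N k : ℕ} (hN : 1 ≤ N) (hk : k ≤ 2) :
    signedTripleCount (N + 1) k = -signedTripleCount N 0 + signedTripleCount N (k + 1) := by
  rw [signedTripleCount, sum_filter, range_add_one, sum_powerset_insert notMem_range_self, add_comm]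
  congr 1
  · rw [signedTripleCount, sum_filter, ← sum_neg_distrib]
    refine sum_congr rfl fun T hT => ?_
    have hT' := mem_powerset.1 hT
    have hNT : N ∉ T := fun h => lt_irrefl N (mem_range.1 (hT' h))
    have h0 : 0 ∈ insert N T ↔ 0 ∈ T := by simp; omega
    simp only [meetsTriples_insert_iff hk, card_insert_of_notMem hNT, h0, add_zero,
      pow_succ]
    split_ifs <;> simp
  · rw [signedTripleCount, sum_filter, show N + 1 + k = N + (k + 1) by omega]

theorem signedTripleCount_eq (m : ℕ) {k : ℕ} (hk : k ≤ 2) :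
    signedTripleCount (m + 1) k =
      (if (m + k) % 4 = 3 then 1 else 0) - (if m % 4 = 0 then 1 else 0) := by
  induction m generalizing k with
  | zero =>
    rw [signedTripleCount_one hk]
    interval_cases k <;> simp
  | succ m ih =>
    rw [signedTripleCount_succ (by omega) hk, ih (Nat.zero_le 2)]
    rcases Nat.lt_or_ge k 2 with hk' | hk'
    · rw [ih hk']
      split_ifs <;> omega
    · obtain rfl : k = 2 := by omega
      rw [signedTripleCount_three]
      split_ifs <;> omega

theorem sum_isDomSet_cycleGraph_zero_mem (m : ℕ) :
    ∑ S with IsDomSet (cycleGraph (m + 1)) S ∧ 0 ∈ S, (-1 : ℤ) ^ #S =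
      signedTripleCount (m + 1) 0 := by
  rw [signedTripleCount, add_zero, sum_filter, sum_filter,
    ← sum_map_valEmbedding_eq_sum_powerset_range]
  refine sum_congr rfl fun S _ => ?_
  have h0 : 0 ∈ S.map Fin.valEmbedding ↔ 0 ∈ S := by simp
  by_cases h : 0 ∈ S
  · simp only [isDomSet_cycleGraph_iff_meetsTriples h, h0, h, card_map, and_true, true_and]
  · simp only [h0, h, and_false, false_and, if_false]

theorem domPoly_cycle_derivative_eval_neg_one_general (n : ℕ) :
    (derivative (domPoly (cycleGraph n))).eval (-1) =
      if n % 4 = 0 then -(n : ℤ) else if n % 4 = 1 then (n : ℤ) else 0 := by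
  rw [derivative_domPoly_eval_neg_one]
  cases n with
  | zero => simp
  | succ m =>
    simp only [sum_isDomSet_cycleGraph_mem, sum_const, card_univ, Fintype.card_fin,
      sum_isDomSet_cycleGraph_zero_mem, signedTripleCount_eq m (Nat.zero_le 2), nsmul_eq_mul]
    push_cast
    split_ifs <;> omega

theorem domPoly_cycle_derivative_eval_neg_one (n : ℕ) (hn : 1 ≤ n) :
    (derivative (domPoly (cycleGraph n))).eval (-1) =
      if n % 4 = 0 then -(n : ℤ) else if n % 4 = 1 then (n : ℤ) else 0 :=
  domPoly_cycle_derivative_eval_neg_one_general n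
end

section
/- If n_1, ..., n_k are positive integers summing to n and D(C_n, x) = Π_{i=1}^k D(C_{n_i}, x), then ⌈n/3⌉ = Σ_{i=1}^k ⌈n_i/3⌉, and hence at least k - 2 of the numbers n_1, ..., n_k are divisible by 3. -/
open Polynomial SimpleGraph

/- ### Auxiliary lemmas -/

lemma ceilq (m : ℕ) : ⌈(m : ℚ) / 3⌉₊ = (m + 2) / 3 := by
  apply le_antisymm
  · rw [Nat.ceil_le, div_le_iff₀ (by norm_num : (0:ℚ) < 3)]
    exact_mod_cast (by omega : m ≤ ((m + 2) / 3) * 3)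
  · rcases Nat.eq_zero_or_pos ((m + 2) / 3) with h | h
    · omega
    · have : (m + 2) / 3 - 1 < ⌈(m : ℚ) / 3⌉₊ := by
        rw [Nat.lt_ceil, lt_div_iff₀ (by norm_num : (0:ℚ) < 3)]
        exact_mod_cast (by omega : ((m + 2) / 3 - 1) * 3 < m)
      omega

lemma domPoly_coeff {V : Type*} [Fintype V] (G : SimpleGraph V) (j : ℕ)
    (hj : j ≤ Fintype.card V) :
    (domPoly G).coeff j = (Nat.card {S : Finset V // IsDomSet G S ∧ S.card = j} : ℤ) := by
  unfold domPoly
  rw [finset_sum_coeff]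
  have : ∀ i ∈ Finset.range (Fintype.card V + 1),
      ((Nat.card {S : Finset V // IsDomSet G S ∧ S.card = i} : ℤ) • (X : Polynomial ℤ) ^ i).coeff j
        = if j = i then (Nat.card {S : Finset V // IsDomSet G S ∧ S.card = i} : ℤ) else 0 := by
    intro i _
    rw [coeff_smul, coeff_X_pow, smul_eq_mul]
    split <;> simp
  rw [Finset.sum_congr rfl this, Finset.sum_ite_eq (Finset.range (Fintype.card V + 1))]
  simp [Nat.lt_succ_iff, hj]

lemma deg_le (m : ℕ) (u : Fin m) : (cycleGraph m).degree u ≤ 2 := by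
  match m with
  | 0 => exact u.elim0
  | 1 =>
    rw [SimpleGraph.degree]
    exact le_trans (Finset.card_le_card (Finset.subset_univ _)) (by simp)
  | m + 2 =>
    rw [cycleGraph_degree_two_le]
    exact (Finset.card_insert_le _ _).trans (by simp)

/-- Lower bound: a dominating set of the cycle has size at least m/3. -/
lemma cycle_dom_lb (m : ℕ) (S : Finset (Fin m)) (h : IsDomSet (cycleGraph m) S) :
    m ≤ 3 * S.card := by
  have hsub : (Finset.univ : Finset (Fin m)) ⊆
      S.biUnion (fun u => (cycleGraph m).neighborFinset u ∪ {u}) := by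
    intro v _
    rcases h v with hv | ⟨u, hu, hadj⟩
    · exact Finset.mem_biUnion.2 ⟨v, hv, by simp⟩
    · exact Finset.mem_biUnion.2 ⟨u, hu, by simp [SimpleGraph.mem_neighborFinset, hadj]⟩
  calc m = (Finset.univ : Finset (Fin m)).card := by simp
    _ ≤ (S.biUnion (fun u => (cycleGraph m).neighborFinset u ∪ {u})).card :=
        Finset.card_le_card hsub
    _ ≤ ∑ u ∈ S, ((cycleGraph m).neighborFinset u ∪ {u}).card := Finset.card_biUnion_le
    _ ≤ ∑ u ∈ S, 3 := by
        refine Finset.sum_le_sum fun u _ => ?_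
        calc ((cycleGraph m).neighborFinset u ∪ {u}).card
            ≤ ((cycleGraph m).neighborFinset u).card + ({u} : Finset (Fin m)).card :=
              Finset.card_union_le _ _
          _ ≤ 2 + 1 := by
              have hd := deg_le m u
              rw [SimpleGraph.degree] at hd
              simp only [Finset.card_singleton]
              omega
          _ = 3 := rfl
    _ = 3 * S.card := by rw [Finset.sum_const, smul_eq_mul, mul_comm]

lemma card_multiples3 (m : ℕ) :
    ((Finset.range m).filter (fun j => j % 3 = 0)).card = (m + 2) / 3 := by
  induction m with
  | zero => simp
  | succ m ih =>
    rw [Finset.range_add_one, Finset.filter_insert]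
    split
    · rw [Finset.card_insert_of_notMem (by simp)]
      omega
    · omega

lemma fin_filter_card (m : ℕ) :
    (Finset.univ.filter (fun v : Fin m => v.val % 3 = 0)).card = (m + 2) / 3 := by
  rw [← card_multiples3 m]
  apply Finset.card_bij (fun v _ => v.val)
  · intro a ha
    simp only [Finset.mem_filter, Finset.mem_univ, true_and] at ha
    simp [a.isLt, ha]
  · intro a _ b _ hab
    exact Fin.ext hab
  · intro b hb
    simp only [Finset.mem_filter, Finset.mem_range] at hb
    exact ⟨⟨b, hb.1⟩, by simp [hb.2], rfl⟩

/-- Existence: the cycle has a dominating set of size ⌈m/3⌉. -/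
lemma cycle_dom_exists (m : ℕ) :
    ∃ S : Finset (Fin m), IsDomSet (cycleGraph m) S ∧ S.card = (m + 2) / 3 := by
  refine ⟨Finset.univ.filter (fun v : Fin m => v.val % 3 = 0), ?_, fin_filter_card m⟩
  intro v
  have hm : 0 < m := v.pos
  have hv3 : v.val % 3 < 3 := Nat.mod_lt v.val (by norm_num)
  rcases (by omega : v.val % 3 = 0 ∨ v.val % 3 = 1 ∨ v.val % 3 = 2) with h0 | h1 | h2
  · exact Or.inl (by simp [h0])
  · -- v.val % 3 = 1, dominated by u with u.val = v.val - 1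
    have hv1 : 1 ≤ v.val := by omega
    have hm2 : 2 ≤ m := by have := v.isLt; omega
    refine Or.inr ⟨⟨v.val - 1, by omega⟩, by simp; omega, ?_⟩
    rw [cycleGraph_adj']
    right
    rw [Fin.sub_def]
    simp only
    rw [show m - (v.val - 1) + v.val = m + 1 by omega, Nat.add_mod_left,
      Nat.mod_eq_of_lt hm2]
  · -- v.val % 3 = 2
    have hm2 : 2 ≤ m := by have := v.isLt; omega
    by_cases hlt : v.val + 1 < m
    · refine Or.inr ⟨⟨v.val + 1, hlt⟩, by simp; omega, ?_⟩
      rw [cycleGraph_adj']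
      left
      rw [Fin.sub_def]
      simp only
      rw [show m - v.val + (v.val + 1) = m + 1 by omega, Nat.add_mod_left,
        Nat.mod_eq_of_lt hm2]
    · -- v.val = m - 1, so m % 3 = 0, dominated by 0
      have hv : v.val = m - 1 := by have := v.isLt; omega
      refine Or.inr ⟨⟨0, hm⟩, by simp, ?_⟩
      rw [cycleGraph_adj']
      left
      rw [Fin.sub_def]
      simp only
      rw [hv, show m - (m - 1) + 0 = 1 by omega, Nat.mod_eq_of_lt hm2]

/-- The trailing degree of the domination polynomial of the cycle. -/
lemma domPoly_cycle_trailing (m : ℕ) :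
    domPoly (cycleGraph m) ≠ 0 ∧
      (domPoly (cycleGraph m)).natTrailingDegree = (m + 2) / 3 := by
  set c := (m + 2) / 3 with hc
  have hcm : c ≤ m := by omega
  have hcard : Fintype.card (Fin m) = m := Fintype.card_fin m
  have hcoeffc : (domPoly (cycleGraph m)).coeff c ≠ 0 := by
    rw [domPoly_coeff _ c (by omega)]
    obtain ⟨S, hS, hcardS⟩ := cycle_dom_exists m
    have : Nonempty {S : Finset (Fin m) // IsDomSet (cycleGraph m) S ∧ S.card = c} :=
      ⟨⟨S, hS, hcardS⟩⟩
    have := Nat.card_pos (α := {S : Finset (Fin m) // IsDomSet (cycleGraph m) S ∧ S.card = c})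
    exact_mod_cast this.ne'
  have hne : domPoly (cycleGraph m) ≠ 0 := fun h => hcoeffc (by simp [h])
  refine ⟨hne, le_antisymm (natTrailingDegree_le_of_ne_zero hcoeffc) ?_⟩
  apply le_natTrailingDegree hne
  intro j hj
  rw [domPoly_coeff _ j (by omega)]
  have : IsEmpty {S : Finset (Fin m) // IsDomSet (cycleGraph m) S ∧ S.card = j} := by
    constructor
    rintro ⟨S, hS, hcardS⟩
    have := cycle_dom_lb m S hS
    omega
  simp [Nat.card_of_isEmpty]

lemma natTrailingDegree_prod' {ι : Type*} (s : Finset ι) (f : ι → Polynomial ℤ)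
    (h : ∀ i ∈ s, f i ≠ 0) :
    (∏ i ∈ s, f i).natTrailingDegree = ∑ i ∈ s, (f i).natTrailingDegree := by
  induction s using Finset.cons_induction with
  | empty => simp
  | cons a s ha ih =>
    rw [Finset.prod_cons, Finset.sum_cons,
      natTrailingDegree_mul (h a (Finset.mem_cons_self a s))
        (Finset.prod_ne_zero_iff.2 fun i hi => h i (Finset.mem_cons_of_mem hi)),
      ih fun i hi => h i (Finset.mem_cons_of_mem hi)]

theorem ceil_sum_of_cycle_factorization (k n : ℕ) (ns : Fin k → ℕ)
    (hpos : ∀ i, 0 < ns i) (hsum : ∑ i, ns i = n)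
    (hD : domPoly (cycleGraph n) = ∏ i, domPoly (cycleGraph (ns i))) :
    ⌈(n : ℚ) / 3⌉₊ = ∑ i, ⌈(ns i : ℚ) / 3⌉₊ ∧
      k - 2 ≤ (Finset.univ.filter fun i => 3 ∣ ns i).card := by
  have key : (n + 2) / 3 = ∑ i, (ns i + 2) / 3 := by
    have h1 := (domPoly_cycle_trailing n).2
    have h2 : (∏ i, domPoly (cycleGraph (ns i))).natTrailingDegree
        = ∑ i, (ns i + 2) / 3 := by
      rw [natTrailingDegree_prod' _ _ fun i _ => (domPoly_cycle_trailing (ns i)).1]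
      exact Finset.sum_congr rfl fun i _ => (domPoly_cycle_trailing (ns i)).2
    rw [← h1, hD, h2]
  constructor
  · simp_rw [ceilq]
    exact key
  · -- count argument
    set T := Finset.univ.filter (fun i => ¬ 3 ∣ ns i) with hT
    have hsplit : (Finset.univ.filter fun i => 3 ∣ ns i).card + T.card = k := by
      rw [hT, Finset.card_filter_add_card_filter_not, Finset.card_univ, Fintype.card_fin]
    have hTle : T.card ≤ 2 := by
      have hterm : ∀ i ∈ T, (1 : ℤ) ≤ 3 * (((ns i + 2) / 3 : ℕ) : ℤ) - (ns i : ℤ) := by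
        intro i hi
        rw [hT, Finset.mem_filter] at hi
        have hd : ¬ 3 ∣ ns i := hi.2
        have h5 : ns i + 1 ≤ 3 * ((ns i + 2) / 3) := by omega
        have h6 := hpos i
        push_cast
        omega
      have h1 : (T.card : ℤ) ≤ ∑ i ∈ T, (3 * (((ns i + 2) / 3 : ℕ) : ℤ) - (ns i : ℤ)) := by
        calc (T.card : ℤ) = ∑ _i ∈ T, (1 : ℤ) := by simp
          _ ≤ _ := Finset.sum_le_sum hterm
      have h2 : ∑ i ∈ T, (3 * (((ns i + 2) / 3 : ℕ) : ℤ) - (ns i : ℤ))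
          ≤ ∑ i, (3 * (((ns i + 2) / 3 : ℕ) : ℤ) - (ns i : ℤ)) := by
        apply Finset.sum_le_sum_of_subset_of_nonneg (Finset.subset_univ T)
        intro i _ _
        have : ns i ≤ 3 * ((ns i + 2) / 3) := by omega
        push_cast
        omega
      have h3 : ∑ i, (3 * (((ns i + 2) / 3 : ℕ) : ℤ) - (ns i : ℤ))
          = 3 * (((n + 2) / 3 : ℕ) : ℤ) - (n : ℤ) := by
        rw [Finset.sum_sub_distrib, ← Finset.mul_sum]
        congr 1
        · congr 1
          exact_mod_cast key.symm
        · exact_mod_cast hsum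
      have h4 : 3 * (((n + 2) / 3 : ℕ) : ℤ) - (n : ℤ) ≤ 2 := by
        have : 3 * ((n + 2) / 3) ≤ n + 2 := by omega
        push_cast
        omega
      have := h1.trans (h2.trans_eq h3)
      omega
    omega
end
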